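/- Let H and L be finite-dimensional complex inner product spaces and let S be a unitary operator on the direct sum H ⊕ L (with the inner product making H and L orthogonal). Then for every vector ξ ∈ H there exist vectors τ ∈ H and v ∈ L such that S(ξ ⊕ v) = τ ⊕ v. -/

import Mathlib

/-!
Let `B v = (S (0 ⊕ v))_L` be the compression of `S` to `L`; since `S` preserves norms, `B` is a
contraction. The `L`-component of `S (ξ ⊕ v)` is `c + B v` with `c = (S (ξ ⊕ 0))_L`, so we must
solve `(1 - B) v = c`. In finite dimension `range (1 - B)` is the orthogonal complement of the
fixed points of `B†`, and for a contraction these are the fixed points of `B`. A fixed point `u`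
of `B` loses no norm under `S`, so `S (0 ⊕ u) = 0 ⊕ u`, and then
`⟪u, c⟫ = ⟪S (0 ⊕ u), S (ξ ⊕ 0)⟫ = ⟪0 ⊕ u, ξ ⊕ 0⟫ = 0`.
-/

open RCLike
open scoped InnerProductSpace

section Contraction

variable {𝕜 E : Type*} [RCLike 𝕜] [NormedAddCommGroup E] [InnerProductSpace 𝕜 E]

theorem eq_of_norm_le_of_re_inner_eq_norm_sq {x y : E} (hle : ‖y‖ ≤ ‖x‖)
    (hre : re ⟪x, y⟫_𝕜 = ‖x‖ ^ 2) : y = x := by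
  have hsq : ‖x - y‖ ^ 2 ≤ 0 := by
    rw [norm_sub_sq (𝕜 := 𝕜), hre]
    nlinarith [norm_nonneg y]
  exact (sub_eq_zero.mp (norm_eq_zero.mp (by nlinarith [norm_nonneg (x - y)]))).symm

variable [FiniteDimensional 𝕜 E] {T : E →ₗ[𝕜] E}

theorem LinearMap.apply_eq_self_of_adjoint_apply_eq_self (hT : ∀ x, ‖T x‖ ≤ ‖x‖) {u : E}
    (hu : T.adjoint u = u) : T u = u :=
  eq_of_norm_le_of_re_inner_eq_norm_sq (hT u) <| by
    rw [← LinearMap.adjoint_inner_left, hu, inner_self_eq_norm_sq]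

theorem LinearMap.mem_range_one_sub_of_forall_inner_eq_zero (hT : ∀ x, ‖T x‖ ≤ ‖x‖) {c : E}
    (hc : ∀ u, T u = u → ⟪u, c⟫_𝕜 = 0) : c ∈ LinearMap.range (1 - T) := by
  rw [← Submodule.orthogonal_orthogonal (LinearMap.range (1 - T)), LinearMap.orthogonal_range]
  intro u hu
  have hfix : T.adjoint u = u := by
    rwa [LinearMap.mem_ker, map_sub, LinearMap.adjoint_one, LinearMap.sub_apply,
      Module.End.one_apply, sub_eq_zero, eq_comm] at hu
  exact hc u (T.apply_eq_self_of_adjoint_apply_eq_self hT hfix)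

end Contraction

namespace LinearIsometry

variable {𝕜 E F : Type*} [RCLike 𝕜] [NormedAddCommGroup E] [InnerProductSpace 𝕜 E]
  [NormedAddCommGroup F] [InnerProductSpace 𝕜 F] (S : WithLp 2 (E × F) →ₗᵢ[𝕜] WithLp 2 (E × F))

noncomputable def lowerRightCorner : F →ₗ[𝕜] F where
  toFun v := (S (WithLp.toLp 2 (0, v))).snd
  map_add' v w := by
    rw [← WithLp.add_snd, ← map_add, ← WithLp.toLp_add, Prod.mk_add_mk, add_zero]
  map_smul' a v := by
    rw [RingHom.id_apply, ← WithLp.smul_snd, ← map_smul, ← WithLp.toLp_smul, Prod.smul_mk,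
      smul_zero]

@[simp]
theorem lowerRightCorner_apply (v : F) :
    S.lowerRightCorner v = (S (WithLp.toLp 2 (0, v))).snd := rfl

theorem norm_sq_fst_add_norm_sq_lowerRightCorner (v : F) :
    ‖(S (WithLp.toLp 2 (0, v))).fst‖ ^ 2 + ‖S.lowerRightCorner v‖ ^ 2 = ‖v‖ ^ 2 := by
  rw [lowerRightCorner_apply, ← WithLp.prod_norm_sq_eq_of_L2, S.norm_map, WithLp.norm_toLp_snd]

theorem norm_lowerRightCorner_le (v : F) : ‖S.lowerRightCorner v‖ ≤ ‖v‖ :=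
  le_of_sq_le_sq (by nlinarith [S.norm_sq_fst_add_norm_sq_lowerRightCorner v]) (norm_nonneg v)

theorem apply_toLp_zero_eq_of_lowerRightCorner_eq {v : F} (hv : S.lowerRightCorner v = v) :
    S (WithLp.toLp 2 (0, v)) = WithLp.toLp 2 (0, v) := by
  have hfst := S.norm_sq_fst_add_norm_sq_lowerRightCorner v
  rw [hv, add_eq_right, sq_eq_zero_iff, norm_eq_zero] at hfst
  exact congrArg (WithLp.toLp 2) (Prod.ext hfst hv)

theorem inner_snd_apply_toLp_eq_zero_of_lowerRightCorner_eq {u : F}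
    (hu : S.lowerRightCorner u = u) (ξ : E) : ⟪u, (S (WithLp.toLp 2 (ξ, 0))).snd⟫_𝕜 = 0 := by
  have h := S.inner_map_map (WithLp.toLp 2 (0, u)) (WithLp.toLp 2 (ξ, 0))
  rw [S.apply_toLp_zero_eq_of_lowerRightCorner_eq hu] at h
  simpa [WithLp.prod_inner_apply] using h

theorem exists_snd_apply_toLp_eq [FiniteDimensional 𝕜 F] (ξ : E) :
    ∃ v : F, (S (WithLp.toLp 2 (ξ, v))).snd = v := by
  obtain ⟨v, hv⟩ := S.lowerRightCorner.mem_range_one_sub_of_forall_inner_eq_zero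
    S.norm_lowerRightCorner_le
    fun _ hu => S.inner_snd_apply_toLp_eq_zero_of_lowerRightCorner_eq hu ξ
  refine ⟨v, ?_⟩
  have hsplit : WithLp.toLp 2 (ξ, v) = WithLp.toLp 2 (ξ, 0) + WithLp.toLp 2 ((0 : E), v) := by
    rw [← WithLp.toLp_add, Prod.mk_add_mk, add_zero, zero_add]
  rw [hsplit, map_add, WithLp.add_snd, ← hv]
  simp

end LinearIsometry

theorem transduction_exists
    {H L : Type*}
    [NormedAddCommGroup H] [InnerProductSpace ℂ H]
    [NormedAddCommGroup L] [InnerProductSpace ℂ L] [FiniteDimensional ℂ L]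
    (S : WithLp 2 (H × L) ≃ₗᵢ[ℂ] WithLp 2 (H × L)) (ξ : H) :
    ∃ (τ : H) (v : L),
      S ((WithLp.equiv 2 (H × L)).symm (ξ, v)) = (WithLp.equiv 2 (H × L)).symm (τ, v) := by
  obtain ⟨v, hv⟩ := S.toLinearIsometry.exists_snd_apply_toLp_eq ξ
  exact ⟨_, v, congrArg (WithLp.toLp 2) (Prod.ext rfl hv)⟩
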